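/- (Bootstrap lemma for the energy–dissipation inequality.) For every c > 0, C₀ > 0 and T > 0 there exist ε₀ > 0 and M > 0, depending only on c, C₀ and T, such that for every ε ∈ (0, ε₀], every differentiable function ℰ : [0, T] → [0, ∞) with ℰ(0) ≤ C₀, and every continuous function 𝒟 : [0, T] → [0, ∞) satisfying ℰ'(t) + (1/2)𝒟(t) ≤ c ℰ(t) + c ε ℰ(t)^{3/2} + c ε ℰ(t)² + c ε⁶ ℰ(t)³ + c (ε + ε² ℰ(t)^{1/2} + ε⁴ ℰ(t)^{3/2}) 𝒟(t) for all t ∈ [0, T], one has ℰ(t) ≤ M for all t ∈ [0, T]. -/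

import Mathlib

/-!
As long as `ℰ ≤ M`, smallness of `ε` makes the superlinear terms at most `c / 2` and the
coefficient of `𝒟` at most `1 / 2`, so `ℰ' ≤ c ℰ + c / 2`. The Grönwall barrier
`b t = (C₀ + 1) e^{c t} - 1` solves `b' = c b + c` and stays below `M = (C₀ + 1) e^{c T}` on
`[0, T]`. A comparison argument only needs the differential inequality where `ℰ` touches `b`,
and there `ℰ ≤ M`; so `ℰ` never crosses `b`.
-/

open Real Set

theorem le_gronwallBound_of_deriv_le_bootstrap {f f' : ℝ → ℝ} {a b δ K ε ε' M : ℝ}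
    (hf : ∀ x ∈ Icc a b, HasDerivWithinAt f (f' x) (Icc a b) x) (ha : f a ≤ δ)
    (hεε' : ε < ε') (hM : ∀ x ∈ Icc a b, gronwallBound δ K ε' (x - a) ≤ M)
    (bound : ∀ x ∈ Ico a b, f x ≤ M → f' x ≤ K * f x + ε) :
    ∀ x ∈ Icc a b, f x ≤ gronwallBound δ K ε' (x - a) := by
  -- `ε < ε'` makes the barrier grow strictly faster than `f` wherever they meet.
  refine image_le_of_deriv_right_lt_deriv_boundary (fun x hx => (hf x hx).continuousWithinAt)
    (fun x hx => (hf x (Ico_subset_Icc_self hx)).mono_of_mem_nhdsWithin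
      (Icc_mem_nhdsGE_of_mem hx)) (by rwa [sub_self, gronwallBound_x0])
    (fun x => hasDerivAt_gronwallBound_shift δ K ε' x a) fun x hx hfx => ?_
  have hfM : f x ≤ M := hfx ▸ hM x (Ico_subset_Icc_self hx)
  calc f' x ≤ K * f x + ε := bound x hx hfM
    _ < K * gronwallBound δ K ε' (x - a) + ε' := by rw [hfx]; linarith

theorem gronwallBound_self_eq (δ K x : ℝ) (hK : K ≠ 0) :
    gronwallBound δ K K x = (δ + 1) * exp (K * x) - 1 := by
  rw [gronwallBound_of_K_ne_0 hK, div_self hK]; ring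

section
variable {c ε x d M : ℝ}

theorem nonlinear_terms_le (hε : 0 ≤ ε) (hε1 : ε ≤ 1) (hx : 0 ≤ x) (hxM : x ≤ M) :
    ε * x ^ ((3:ℝ)/2) + ε * x ^ 2 + ε ^ 6 * x ^ 3 ≤
      ε * (M ^ ((3:ℝ)/2) + M ^ 2 + M ^ 3) := by
  have h32 : x ^ ((3:ℝ)/2) ≤ M ^ ((3:ℝ)/2) := rpow_le_rpow hx hxM (by norm_num)
  have h2 : x ^ 2 ≤ M ^ 2 := pow_le_pow_left₀ hx hxM 2
  have h3 : ε ^ 6 * x ^ 3 ≤ ε * M ^ 3 :=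
    mul_le_mul (pow_le_of_le_one hε hε1 (by norm_num)) (pow_le_pow_left₀ hx hxM 3)
      (by positivity) hε
  nlinarith [mul_le_mul_of_nonneg_left h32 hε, mul_le_mul_of_nonneg_left h2 hε]

theorem dissipation_coeff_le (hε : 0 ≤ ε) (hε1 : ε ≤ 1) (hx : 0 ≤ x) (hxM : x ≤ M) :
    ε + ε ^ 2 * x ^ ((1:ℝ)/2) + ε ^ 4 * x ^ ((3:ℝ)/2) ≤
      ε * (1 + M ^ ((1:ℝ)/2) + M ^ ((3:ℝ)/2)) := by
  have h12 : ε ^ 2 * x ^ ((1:ℝ)/2) ≤ ε * M ^ ((1:ℝ)/2) :=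
    mul_le_mul (pow_le_of_le_one hε hε1 (by norm_num)) (rpow_le_rpow hx hxM (by norm_num))
      (by positivity) hε
  have h32 : ε ^ 4 * x ^ ((3:ℝ)/2) ≤ ε * M ^ ((3:ℝ)/2) :=
    mul_le_mul (pow_le_of_le_one hε hε1 (by norm_num)) (rpow_le_rpow hx hxM (by norm_num))
      (by positivity) hε
  linarith

/-- For `0 < ε ≤ smallnessThreshold c M` and `0 ≤ x ≤ M`, the superlinear terms of the energy
inequality are at most `c / 2` and the coefficient of the dissipation is at most `1 / 2`. -/
noncomputable def smallnessThreshold (c M : ℝ) : ℝ :=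
  min 1 (1 / (2 * ((M ^ ((3:ℝ)/2) + M ^ 2 + M ^ 3) +
    c * (1 + M ^ ((1:ℝ)/2) + M ^ ((3:ℝ)/2)))))

theorem smallnessThreshold_pos (hc : 0 < c) (hM : 0 ≤ M) : 0 < smallnessThreshold c M := by
  unfold smallnessThreshold; positivity

theorem energy_rhs_le (hc : 0 < c) (hε : 0 < ε) (hεε₀ : ε ≤ smallnessThreshold c M)
    (hx : 0 ≤ x) (hxM : x ≤ M) (hd : 0 ≤ d) :
    c * x + c * ε * x ^ ((3:ℝ)/2) + c * ε * x ^ 2 + c * ε ^ 6 * x ^ 3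
        + c * (ε + ε ^ 2 * x ^ ((1:ℝ)/2) + ε ^ 4 * x ^ ((3:ℝ)/2)) * d
      ≤ c * x + c / 2 + d / 2 := by
  set A := M ^ ((3:ℝ)/2) + M ^ 2 + M ^ 3
  set B := 1 + M ^ ((1:ℝ)/2) + M ^ ((3:ℝ)/2)
  have hM : 0 ≤ M := hx.trans hxM
  have hε1 : ε ≤ 1 := hεε₀.trans (min_le_left _ _)
  have hεAB : ε * (2 * (A + c * B)) ≤ 1 :=
    (le_div_iff₀ (by positivity)).mp (hεε₀.trans (min_le_right _ _))
  have hεA : ε * A ≤ 1 / 2 := by nlinarith [show 0 ≤ c * B by positivity]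
  have hεB : c * (ε * B) ≤ 1 / 2 := by nlinarith [show 0 ≤ A by positivity]
  have hnonlin : c * (ε * x ^ ((3:ℝ)/2) + ε * x ^ 2 + ε ^ 6 * x ^ 3) ≤ c * (1 / 2) :=
    (mul_le_mul_of_nonneg_left (nonlinear_terms_le hε.le hε1 hx hxM) hc.le).trans
      (mul_le_mul_of_nonneg_left hεA hc.le)
  have hcoeff : c * (ε + ε ^ 2 * x ^ ((1:ℝ)/2) + ε ^ 4 * x ^ ((3:ℝ)/2)) ≤ 1 / 2 :=
    (mul_le_mul_of_nonneg_left (dissipation_coeff_le hε.le hε1 hx hxM) hc.le).trans hεB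
  nlinarith [mul_le_mul_of_nonneg_right hcoeff hd]
end

theorem energy_dissipation_bootstrap (c C₀ T : ℝ) (hc : 0 < c) (hC₀ : 0 < C₀) :
    ∃ ε₀ M : ℝ, 0 < ε₀ ∧ 0 < M ∧
      ∀ ε : ℝ, 0 < ε → ε ≤ ε₀ →
        ∀ E E' D : ℝ → ℝ,
          (∀ t ∈ Icc 0 T, HasDerivWithinAt E (E' t) (Icc 0 T) t) →
          (∀ t ∈ Icc 0 T, 0 ≤ E t) →
          E 0 ≤ C₀ →
          ContinuousOn D (Icc 0 T) →
          (∀ t ∈ Icc 0 T, 0 ≤ D t) →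
          (∀ t ∈ Icc 0 T,
            E' t + (1/2) * D t ≤
              c * E t + c * ε * (E t) ^ ((3:ℝ)/2) + c * ε * (E t)^2 + c * ε^6 * (E t)^3
                + c * (ε + ε^2 * (E t) ^ ((1:ℝ)/2) + ε^4 * (E t) ^ ((3:ℝ)/2)) * D t) →
          ∀ t ∈ Icc 0 T, E t ≤ M := by
  set M := (C₀ + 1) * exp (c * T)
  have hM : 0 < M := by positivity
  refine ⟨smallnessThreshold c M, M, smallnessThreshold_pos hc hM.le, hM, ?_⟩
  intro ε hε hεε₀ E E' D hE hE_nonneg hE0 _ hD_nonneg hineq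
  have hgronwall_le : ∀ t ∈ Icc 0 T, gronwallBound C₀ c c (t - 0) ≤ M := fun t ht => by
    rw [gronwallBound_self_eq C₀ c _ hc.ne', sub_zero]
    have hexp : exp (c * t) ≤ exp (c * T) := exp_le_exp.mpr (mul_le_mul_of_nonneg_left ht.2 hc.le)
    linarith [mul_le_mul_of_nonneg_left hexp (by linarith : (0:ℝ) ≤ C₀ + 1)]
  have hbound : ∀ t ∈ Ico 0 T, E t ≤ M → E' t ≤ c * E t + c / 2 := fun t ht hEM => by
    have ht' := Ico_subset_Icc_self ht
    linarith [hineq t ht', energy_rhs_le hc hε hεε₀ (hE_nonneg t ht') hEM (hD_nonneg t ht')]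
  intro t ht
  exact (le_gronwallBound_of_deriv_le_bootstrap hE hE0 (half_lt_self hc) hgronwall_le hbound t
    ht).trans (hgronwall_le t ht)
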